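/- For every integer m ≥ 1 there exists a real polynomial P_m of degree ⌊m/2⌋ with P_m(0) ≠ 0 such that P_m(g) · Y_m(g) = g^m for all real g with 0 < g < 1/4, where Y_m(g) = ∏_{k=1}^m X_k(g). -/

import Mathlib

open scoped Real BigOperators

/-- The generating functions `X_m` of rooted planar trees of height at most `m`:
`X_0 = 0`, `X_1(g) = g`, `X_m(g) = g/(1 - X_{m-1}(g))`. -/
noncomputable def Xc : ℕ → ℂ → ℂ
  | 0, _ => 0
  | (m + 1), g => g / (1 - Xc m g)

/-- `Y_m(g) = ∏_{k=1}^m X_k(g)`, the generating function of one-sided trees of height `m`. -/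
noncomputable def Yc (m : ℕ) (g : ℂ) : ℂ := ∏ k ∈ Finset.Icc 1 m, Xc k g

/-!
The `X_m` are the convergents of the continued fraction `g/(1 - g/(1 - ⋯))`, so they are
quotients of consecutive solutions of the three-term recurrence `F_{n+2} = F_{n+1} - g F_n`:
`X_{n+1} = g F_n / F_{n+1}`. The product `Y_m` therefore telescopes to `g^m / F_m`. The `F_n` are
the polynomials `∑_k (-1)^k C(n-k, k) g^k`, of degree `⌊n/2⌋` with constant term `1`, and they
do not vanish on `g ≤ 1/4` because there `F_{n+1} ≥ F_n / 2 > 0`.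
-/

open Polynomial

noncomputable def fibPoly (R : Type*) [CommRing R] : ℕ → R[X]
  | 0 => 1
  | 1 => 1
  | n + 2 => fibPoly R (n + 1) - X * fibPoly R n

section CommRing

variable {R : Type*} [CommRing R]

theorem fibPoly_add_two (n : ℕ) : fibPoly R (n + 2) = fibPoly R (n + 1) - X * fibPoly R n :=
  rfl

theorem choose_sub_succ (n k : ℕ) :
    (n + 1 - k).choose (k + 1) = (n - k).choose (k + 1) + (n - k).choose k := by
  rcases le_or_gt k n with hk | hk
  · rw [Nat.sub_add_comm hk, Nat.choose_succ_succ', add_comm]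
  · rw [Nat.sub_eq_zero_of_le hk, Nat.sub_eq_zero_of_le hk.le,
      Nat.choose_zero_succ, Nat.choose_eq_zero_of_lt (by omega : 0 < k)]

theorem coeff_fibPoly (n k : ℕ) : (fibPoly R n).coeff k = (-1) ^ k * ((n - k).choose k : R) := by
  induction n using fibPoly.induct generalizing k with
  | case1 => cases k <;> simp [fibPoly, coeff_one]
  | case2 => cases k <;> simp [fibPoly, coeff_one]
  | case3 n ih₁ ih₀ =>
    cases k with
    | zero => simp [fibPoly_add_two, ih₁]
    | succ k =>
      rw [fibPoly_add_two, coeff_sub, coeff_X_mul, ih₁, ih₀, Nat.succ_sub_succ,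
        show n + 2 - (k + 1) = n + 1 - k by omega, choose_sub_succ]
      push_cast
      ring

theorem natDegree_fibPoly [CharZero R] (n : ℕ) : (fibPoly R n).natDegree = n / 2 := by
  refine natDegree_eq_of_le_of_coeff_ne_zero ?_ ?_
  · refine natDegree_le_iff_coeff_eq_zero.mpr fun k hk => ?_
    rw [coeff_fibPoly, Nat.choose_eq_zero_of_lt (by omega), Nat.cast_zero, mul_zero]
  · rw [coeff_fibPoly, Ne, (isUnit_neg_one.pow _).mul_right_eq_zero, Nat.cast_eq_zero]
    exact (Nat.choose_pos (by omega)).ne'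

theorem fibPoly_eval_zero (n : ℕ) : (fibPoly R n).eval 0 = 1 := by
  simp [← coeff_zero_eq_eval_zero, coeff_fibPoly]

theorem map_fibPoly {S : Type*} [CommRing S] (f : R →+* S) (n : ℕ) :
    (fibPoly R n).map f = fibPoly S n := by
  ext k
  simp [coeff_fibPoly]

end CommRing

theorem fibPoly_eval_pos_and_le {g : ℝ} (hg : g ≤ 1 / 4) (n : ℕ) :
    0 < (fibPoly ℝ n).eval g ∧ (fibPoly ℝ n).eval g ≤ 2 * (fibPoly ℝ (n + 1)).eval g := by
  induction n with
  | zero => simp [fibPoly]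
  | succ n ih =>
    obtain ⟨hpos, hle⟩ := ih
    have hrec : (fibPoly ℝ (n + 2)).eval g =
        (fibPoly ℝ (n + 1)).eval g - g * (fibPoly ℝ n).eval g := by
      simp [fibPoly_add_two]
    have hgF : g * (fibPoly ℝ n).eval g ≤ (fibPoly ℝ n).eval g / 4 := by nlinarith
    exact ⟨by linarith, by linarith⟩

theorem fibPoly_eval_pos {g : ℝ} (hg : g ≤ 1 / 4) (n : ℕ) : 0 < (fibPoly ℝ n).eval g :=
  (fibPoly_eval_pos_and_le hg n).1

theorem ofReal_eval_fibPoly (g : ℝ) (n : ℕ) :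
    (((fibPoly ℝ n).eval g : ℝ) : ℂ) = (fibPoly ℂ n).eval (g : ℂ) := by
  rw [← map_fibPoly Complex.ofRealHom]
  exact (eval_map_apply Complex.ofRealHom g).symm

section Convergents

variable {z : ℂ}

theorem Xc_succ_eq_div {n : ℕ} (hF : ∀ k ≤ n + 1, (fibPoly ℂ k).eval z ≠ 0) :
    Xc (n + 1) z = z * (fibPoly ℂ n).eval z / (fibPoly ℂ (n + 1)).eval z := by
  induction n with
  | zero => simp [Xc, fibPoly]
  | succ n ih =>
    have h₁ := hF (n + 1) (by omega)
    have h₂ := hF (n + 2) le_rfl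
    rw [Xc, ih fun k hk => hF k (by omega)]
    rw [fibPoly_add_two, eval_sub, eval_mul, eval_X] at h₂ ⊢
    field_simp

theorem fibPoly_eval_mul_Yc {n : ℕ} (hF : ∀ k ≤ n, (fibPoly ℂ k).eval z ≠ 0) :
    (fibPoly ℂ n).eval z * Yc n z = z ^ n := by
  induction n with
  | zero => simp [Yc, fibPoly]
  | succ n ih =>
    have hYc : Yc (n + 1) z = Yc n z * Xc (n + 1) z :=
      Finset.prod_Icc_succ_top (by omega) _
    rw [hYc, Xc_succ_eq_div hF, pow_succ, ← ih fun k hk => hF k (by omega)]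
    field_simp [hF (n + 1) le_rfl]

end Convergents

theorem Yc_eq_rational (m : ℕ) :
    ∃ P : Polynomial ℝ, P.natDegree = m / 2 ∧ P.eval 0 ≠ 0 ∧
      ∀ g : ℝ, 0 < g → g < 1 / 4 →
        ((P.eval g : ℝ) : ℂ) * Yc m (g : ℂ) = (g : ℂ) ^ m := by
  refine ⟨fibPoly ℝ m, natDegree_fibPoly m, by simp [fibPoly_eval_zero], fun g _ hg => ?_⟩
  have hF (k : ℕ) : (fibPoly ℂ k).eval (g : ℂ) ≠ 0 := by
    rw [← ofReal_eval_fibPoly]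
    exact_mod_cast (fibPoly_eval_pos hg.le k).ne'
  rw [ofReal_eval_fibPoly]
  exact fibPoly_eval_mul_Yc fun k _ => hF k
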